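/- arXiv:1308.6089 — 6 statements merged into one kernel-verified Lean document; each statement's English description precedes it below -/
import Mathlib

section
/- Let G be a group, A a G-graded associative unital ring, and M a G-graded A-module. If N is a graded A-submodule of M that admits a complement as an A-module (i.e., there is an A-submodule P of M with N ∩ P = 0 and N + P = M), then N admits a complement as a graded A-module (i.e., there is a graded A-submodule P' of M with N ∩ P' = 0 and N + P' = M). -/
/-!
Let `π` be the projection onto `N` along the given complement. Its degree-preserving part
`x ↦ ∑ g, (π x_g)_g` is again `A`-linear, because a homogeneous `a ∈ 𝒜 h` shifts every degree
by the same `h` on the left, so taking the `g`-component of `π x_g` commutes with `a •`.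
As `N` is graded, it is still a projection onto `N`; its kernel is a complement of `N` and is
graded because the degree-preserving part commutes with taking components.
-/

namespace DirectSum

section AddCommMonoid

variable {ι M σ : Type*} [DecidableEq ι] [AddCommMonoid M] [SetLike σ M] [AddSubmonoidClass σ M]
  (ℳ : ι → σ) [Decomposition ℳ]

/-- `x ↦ ∑ i, (f xᵢ)ᵢ` -/
def degreePreservingPart (f : M →+ M) : M →+ M :=
  (toAddMonoid fun i =>
    ({ toFun := fun x => (decompose ℳ (f x) i : M)
       map_zero' := by simp
       map_add' := fun x y => by simp } : ℳ i →+ M)).comp (decomposeAddEquiv ℳ).toAddMonoidHom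

variable {ℳ}

theorem degreePreservingPart_apply_of_mem (f : M →+ M) {x : M} {i : ι} (hx : x ∈ ℳ i) :
    degreePreservingPart ℳ f x = decompose ℳ (f x) i := by
  simp [degreePreservingPart, decompose_of_mem ℳ hx]

theorem decompose_apply_eq_of_forall_mem (f : M →+ M) (hf : ∀ i, ∀ x ∈ ℳ i, f x ∈ ℳ i)
    (x : M) (i : ι) : (decompose ℳ (f x) i : M) = f (decompose ℳ x i) := by
  induction x using Decomposition.inductionOn ℳ with
  | zero => simp
  | @homogeneous j y =>
    by_cases hji : j = i
    · subst hji
      rw [decompose_of_mem_same ℳ (hf j y y.2), decompose_coe, of_eq_same]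
    · rw [decompose_of_mem_ne ℳ (hf j y y.2) hji, decompose_coe, of_eq_of_ne _ _ _ (Ne.symm hji),
        ZeroMemClass.coe_zero, map_zero]
  | add x y hx hy => simp [hx, hy]

theorem decompose_degreePreservingPart (f : M →+ M) (x : M) (i : ι) :
    (decompose ℳ (degreePreservingPart ℳ f x) i : M) =
      degreePreservingPart ℳ f (decompose ℳ x i) := by
  refine decompose_apply_eq_of_forall_mem _ (fun j y hy => ?_) x i
  rw [degreePreservingPart_apply_of_mem f hy]
  exact SetLike.coe_mem _

variable {P : Type*} [SetLike P M] {p : P}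

theorem degreePreservingPart_mem [AddSubmonoidClass P M] (hp : SetLike.IsHomogeneous ℳ p) {f : M →+ M}
    (hf : ∀ x, f x ∈ p) (x : M) : degreePreservingPart ℳ f x ∈ p := by
  induction x using Decomposition.inductionOn ℳ with
  | zero => simp
  | @homogeneous i y =>
    rw [degreePreservingPart_apply_of_mem f y.2]
    exact hp i (hf y)
  | add x y hx hy => rw [map_add]; exact add_mem hx hy

theorem degreePreservingPart_eq_self (hp : SetLike.IsHomogeneous ℳ p) {f : M →+ M}
    (hf : ∀ x ∈ p, f x = x) {x : M} (hx : x ∈ p) : degreePreservingPart ℳ f x = x := by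
  refine (decompose ℳ).injective (DFinsupp.ext fun i => Subtype.ext ?_)
  rw [decompose_degreePreservingPart,
    degreePreservingPart_apply_of_mem f (decompose ℳ x i).2, hf _ (hp i hx), decompose_coe,
    of_eq_same]

end AddCommMonoid

section Module

variable {ι A M σA σM : Type*} [DecidableEq ι] [Mul ι] [IsLeftCancelMul ι]
  [Semiring A] [SetLike σA A] [AddSubmonoidClass σA A] {𝒜 : ι → σA} [Decomposition 𝒜]
  [AddCommMonoid M] [Module A M] [SetLike σM M] [AddSubmonoidClass σM M]
  {ℳ : ι → σM} [Decomposition ℳ]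
  (hM : ∀ i j, ∀ a ∈ 𝒜 i, ∀ x ∈ ℳ j, a • x ∈ ℳ (i * j))
include hM

omit [AddSubmonoidClass σA A] [Decomposition 𝒜] in
theorem decompose_smul_of_mem {a : A} {i : ι} (ha : a ∈ 𝒜 i) (x : M) (j : ι) :
    (decompose ℳ (a • x) (i * j) : M) = a • (decompose ℳ x j : M) := by
  induction x using Decomposition.inductionOn ℳ with
  | zero => simp
  | @homogeneous k y =>
    have hay : a • (y : M) ∈ ℳ (i * k) := hM i k a ha y y.2
    by_cases hkj : k = j
    · subst hkj
      rw [decompose_of_mem_same ℳ hay, decompose_coe, of_eq_same]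
    · rw [decompose_of_mem_ne ℳ hay (mul_left_cancel_iff.not.mpr hkj), decompose_coe,
        of_eq_of_ne _ _ _ (Ne.symm hkj), ZeroMemClass.coe_zero, smul_zero]
  | add x y hx hy => simp [hx, hy, smul_add]

theorem degreePreservingPart_smul (f : M →ₗ[A] M) (a : A) (x : M) :
    degreePreservingPart ℳ f.toAddMonoidHom (a • x) =
      a • degreePreservingPart ℳ f.toAddMonoidHom x := by
  induction a using Decomposition.inductionOn 𝒜 with
  | zero => simp
  | @homogeneous i a =>
    induction x using Decomposition.inductionOn ℳ with
    | zero => simp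
    | @homogeneous j y =>
      rw [degreePreservingPart_apply_of_mem _ (hM i j a a.2 y y.2),
        degreePreservingPart_apply_of_mem _ y.2, LinearMap.toAddMonoidHom_coe, map_smul,
        decompose_smul_of_mem hM a.2]
    | add x y hx hy => rw [smul_add, map_add, hx, hy, map_add, smul_add]
  | add a b ha hb => rw [add_smul, map_add, ha, hb, add_smul]

def degreePreservingPartₗ (f : M →ₗ[A] M) : M →ₗ[A] M where
  toFun := degreePreservingPart ℳ f.toAddMonoidHom
  map_add' := map_add _
  map_smul' := degreePreservingPart_smul hM f

theorem isHomogeneous_ker_degreePreservingPartₗ (f : M →ₗ[A] M) :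
    SetLike.IsHomogeneous ℳ (LinearMap.ker (degreePreservingPartₗ hM f)) := by
  intro i x hx
  rw [LinearMap.mem_ker] at hx ⊢
  change degreePreservingPart ℳ _ _ = 0
  rw [← decompose_degreePreservingPart]
  change (decompose ℳ (degreePreservingPartₗ hM f x) i : M) = 0
  simp [hx]

theorem isProj_degreePreservingPartₗ {N : Submodule A M} (hN : SetLike.IsHomogeneous ℳ N)
    {f : M →ₗ[A] M} (hf : LinearMap.IsProj N f) :
    LinearMap.IsProj N (degreePreservingPartₗ hM f) :=
  ⟨degreePreservingPart_mem hN hf.map_mem, fun _ => degreePreservingPart_eq_self hN hf.map_id⟩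

end Module

end DirectSum

open DirectSum in
theorem Submodule.exists_isHomogeneous_isCompl {ι A M σA σM : Type*} [DecidableEq ι] [Mul ι]
    [IsLeftCancelMul ι] [Ring A] [SetLike σA A] [AddSubmonoidClass σA A] {𝒜 : ι → σA}
    [Decomposition 𝒜] [AddCommGroup M] [Module A M] [SetLike σM M] [AddSubmonoidClass σM M]
    {ℳ : ι → σM} [Decomposition ℳ] (hM : ∀ i j, ∀ a ∈ 𝒜 i, ∀ x ∈ ℳ j, a • x ∈ ℳ (i * j))
    {N P : Submodule A M} (hN : SetLike.IsHomogeneous ℳ N) (hNP : IsCompl N P) :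
    ∃ P' : Submodule A M, SetLike.IsHomogeneous ℳ P' ∧ IsCompl N P' := by
  have hπ : LinearMap.IsProj N (N.projection P hNP) :=
    ⟨projection_apply_mem hNP, fun _ => projection_apply_of_mem_left hNP⟩
  exact ⟨_, isHomogeneous_ker_degreePreservingPartₗ hM _,
    (isProj_degreePreservingPartₗ hM hN hπ).isCompl⟩

theorem stmt0_general {G : Type*} [Group G] [DecidableEq G] {A : Type*} [Ring A]
    {M : Type*} [AddCommGroup M] [Module A M]
    (𝒜 : G → AddSubgroup A) [DirectSum.Decomposition 𝒜]
    (ℳ : G → AddSubgroup M) [DirectSum.Decomposition ℳ]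
    (hM : ∀ g h : G, ∀ a ∈ 𝒜 g, ∀ x ∈ ℳ h, a • x ∈ ℳ (g * h))
    (N : Submodule A M)
    (hN : ∀ x ∈ N, ∀ g : G, ((DirectSum.decompose ℳ x g : ℳ g) : M) ∈ N)
    (hcompl : ∃ P : Submodule A M, N ⊓ P = ⊥ ∧ N ⊔ P = ⊤) :
    ∃ P' : Submodule A M,
      (∀ x ∈ P', ∀ g : G, ((DirectSum.decompose ℳ x g : ℳ g) : M) ∈ P') ∧
      N ⊓ P' = ⊥ ∧ N ⊔ P' = ⊤ := by
  obtain ⟨P, hNP_inf, hNP_sup⟩ := hcompl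
  obtain ⟨P', hP', hNP'⟩ := Submodule.exists_isHomogeneous_isCompl hM
    (fun g x hx => hN x hx g) ⟨disjoint_iff.mpr hNP_inf, codisjoint_iff.mpr hNP_sup⟩
  exact ⟨P', fun x hx g => hP' g hx, hNP'.inf_eq_bot, hNP'.sup_eq_top⟩

/-- Graded Maschke: a graded submodule of a graded module over a graded ring which admits
an (ungraded) module complement admits a graded complement. -/
theorem stmt0 {G : Type*} [Group G] [DecidableEq G] {A : Type*} [Ring A]
    {M : Type*} [AddCommGroup M] [Module A M]
    (𝒜 : G → AddSubgroup A) [DirectSum.Decomposition 𝒜]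
    (hA : ∀ g h : G, ∀ a ∈ 𝒜 g, ∀ b ∈ 𝒜 h, a * b ∈ 𝒜 (g * h))
    (ℳ : G → AddSubgroup M) [DirectSum.Decomposition ℳ]
    (hM : ∀ g h : G, ∀ a ∈ 𝒜 g, ∀ x ∈ ℳ h, a • x ∈ ℳ (g * h))
    (N : Submodule A M)
    (hN : ∀ x ∈ N, ∀ g : G, ((DirectSum.decompose ℳ x g : ℳ g) : M) ∈ N)
    (hcompl : ∃ P : Submodule A M, N ⊓ P = ⊥ ∧ N ⊔ P = ⊤) :
    ∃ P' : Submodule A M,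
      (∀ x ∈ P', ∀ g : G, ((DirectSum.decompose ℳ x g : ℳ g) : M) ∈ P') ∧
      N ⊓ P' = ⊥ ∧ N ⊔ P' = ⊤ :=
  stmt0_general 𝒜 ℳ hM N hN hcompl
end

section
/- Let R be a commutative ring, M an R-module, Q a quadratic form on M, and u, v ∈ M a hyperbolic pair. Then for every unit α of R: s_α * ι(u) = α • ι(u), ι(u) * s_α = α⁻¹ • ι(u), s_α * ι(v) = α⁻¹ • ι(v), and ι(v) * s_α = α • ι(v). -/
/-! For a hyperbolic pair, `x = ι u` and `y = ι v` satisfy `x² = y² = 0` and `xy + yx = 1`.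
In any algebra these relations give `xyx = x(xy + yx) = x` and `yxy = y`, so `a • xy + b • yx`
multiplies `x` by `a` on the left and by `b` on the right, and `y` the other way round. -/

/-- For a hyperbolic pair `u, v` and a unit `α`, the element
`s_α = α • (ι u * ι v) + α⁻¹ • (ι v * ι u)` of the Clifford algebra. -/
def sElem {R M : Type*} [CommRing R] [AddCommGroup M] [Module R M]
    (Q : QuadraticForm R M) (u v : M) (α : Rˣ) : CliffordAlgebra Q :=
  (α : R) • (CliffordAlgebra.ι Q u * CliffordAlgebra.ι Q v)
    + ((α⁻¹ : Rˣ) : R) • (CliffordAlgebra.ι Q v * CliffordAlgebra.ι Q u)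

section SquareZeroPair

variable {R A : Type*} [CommSemiring R] [Semiring A] [Algebra R A] {x y : A}

theorem mul_mul_eq_left_of_mul_self_eq_zero (hx : x * x = 0) (hxy : x * y + y * x = 1) :
    x * y * x = x := by
  calc x * y * x = x * x * y + x * y * x := by rw [hx, zero_mul, zero_add]
    _ = x * (x * y + y * x) := by rw [mul_add, mul_assoc, mul_assoc]
    _ = x := by rw [hxy, mul_one]

theorem smul_add_smul_mul_left (hx : x * x = 0) (hxy : x * y + y * x = 1) (a b : R) :
    (a • (x * y) + b • (y * x)) * x = a • x := by
  rw [add_mul, smul_mul_assoc, smul_mul_assoc, mul_mul_eq_left_of_mul_self_eq_zero hx hxy, mul_assoc,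
    hx, mul_zero, smul_zero, add_zero]

theorem mul_smul_add_smul_left (hx : x * x = 0) (hxy : x * y + y * x = 1) (a b : R) :
    x * (a • (x * y) + b • (y * x)) = b • x := by
  rw [mul_add, mul_smul_comm, mul_smul_comm, ← mul_assoc, hx, zero_mul, smul_zero, zero_add,
    ← mul_assoc, mul_mul_eq_left_of_mul_self_eq_zero hx hxy]

theorem smul_add_smul_mul_right (hy : y * y = 0) (hxy : x * y + y * x = 1) (a b : R) :
    (a • (x * y) + b • (y * x)) * y = b • y := by
  rw [add_comm] at hxy ⊢
  exact smul_add_smul_mul_left hy hxy b a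

theorem mul_smul_add_smul_right (hy : y * y = 0) (hxy : x * y + y * x = 1) (a b : R) :
    y * (a • (x * y) + b • (y * x)) = a • y := by
  rw [add_comm] at hxy ⊢
  exact mul_smul_add_smul_left hy hxy b a

end SquareZeroPair

namespace CliffordAlgebra

variable {R M : Type*} [CommRing R] [AddCommGroup M] [Module R M] {Q : QuadraticForm R M}

theorem ι_mul_self_eq_zero {m : M} (hm : Q m = 0) : ι Q m * ι Q m = 0 := by
  rw [ι_sq_scalar, hm, map_zero]

theorem ι_mul_ι_add_swap_eq_one {u v : M} (huv : QuadraticMap.polar Q u v = 1) :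
    ι Q u * ι Q v + ι Q v * ι Q u = 1 := by
  rw [ι_mul_ι_add_swap, huv, map_one]

end CliffordAlgebra

/-- `s_α` rescales the vectors of a hyperbolic pair: `s_α u = α u`, `u s_α = α⁻¹ u`,
`s_α v = α⁻¹ v`, `v s_α = α v`. -/
theorem stmt7 {R M : Type*} [CommRing R] [AddCommGroup M] [Module R M]
    (Q : QuadraticForm R M) (u v : M)
    (hu : Q u = 0) (hv : Q v = 0) (huv : QuadraticMap.polar Q u v = 1) (α : Rˣ) :
    sElem Q u v α * CliffordAlgebra.ι Q u = (α : R) • CliffordAlgebra.ι Q u ∧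
    CliffordAlgebra.ι Q u * sElem Q u v α = ((α⁻¹ : Rˣ) : R) • CliffordAlgebra.ι Q u ∧
    sElem Q u v α * CliffordAlgebra.ι Q v = ((α⁻¹ : Rˣ) : R) • CliffordAlgebra.ι Q v ∧
    CliffordAlgebra.ι Q v * sElem Q u v α = (α : R) • CliffordAlgebra.ι Q v := by
  have hx := CliffordAlgebra.ι_mul_self_eq_zero hu
  have hy := CliffordAlgebra.ι_mul_self_eq_zero hv
  have hxy := CliffordAlgebra.ι_mul_ι_add_swap_eq_one huv
  exact ⟨smul_add_smul_mul_left hx hxy _ _, mul_smul_add_smul_left hx hxy _ _,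
    smul_add_smul_mul_right hy hxy _ _, mul_smul_add_smul_right hy hxy _ _⟩
end

section
/- Let R be a commutative ring, M an R-module, Q a quadratic form on M, and u, v ∈ M a hyperbolic pair. Then for all units α, β of R: s_α * s_β = s_{αβ}; in particular s_α * s_{α⁻¹} = 1 = s_{α⁻¹} * s_α, so s_α is invertible with inverse s_{α⁻¹}. Moreover, reverse(s_α) = s_{α⁻¹}, where reverse is the canonical anti-automorphism of CliffordAlgebra Q fixing all ι(m); hence s_α * reverse(s_α) = 1. -/
open CliffordAlgebra

theorem CompleteOrthogonalIdempotents.smul_add_smul_mul_smul_add_smul {R A : Type*}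
    [CommSemiring R] [Semiring A] [Algebra R A] {e f : A}
    (h : CompleteOrthogonalIdempotents ![e, f]) (a b c d : R) :
    (a • e + b • f) * (c • e + d • f) = (a * c) • e + (b * d) • f := by
  obtain ⟨hef, hfe, -⟩ := CompleteOrthogonalIdempotents.pair_iff'ₛ.mp h
  have he : e * e = e := h.idem 0
  have hf : f * f = f := h.idem 1
  simp only [add_mul, mul_add, smul_mul_smul_comm, he, hf, hef, hfe, smul_zero, add_zero,
    zero_add]

section HyperbolicPair

variable {R M : Type*} [CommRing R] [AddCommGroup M] [Module R M] {Q : QuadraticForm R M}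
  {u v : M}

theorem ι_mul_ι_mul_ι_mul_ι_of_self_eq_zero (u : M) (hv : Q v = 0) :
    ι Q u * ι Q v * (ι Q v * ι Q u) = 0 := by
  rw [mul_assoc, ← mul_assoc (ι Q v), ι_sq_scalar, hv, map_zero, zero_mul, mul_zero]

theorem completeOrthogonalIdempotents_ι_mul_ι (hu : Q u = 0) (hv : Q v = 0)
    (huv : QuadraticMap.polar Q u v = 1) :
    CompleteOrthogonalIdempotents ![ι Q u * ι Q v, ι Q v * ι Q u] :=
  CompleteOrthogonalIdempotents.pair_iff'ₛ.mpr
    ⟨ι_mul_ι_mul_ι_mul_ι_of_self_eq_zero u hv, ι_mul_ι_mul_ι_mul_ι_of_self_eq_zero v hu,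
      by rw [ι_mul_ι_add_swap, huv, map_one]⟩

theorem sElem_mul (hu : Q u = 0) (hv : Q v = 0) (huv : QuadraticMap.polar Q u v = 1)
    (α β : Rˣ) : sElem Q u v α * sElem Q u v β = sElem Q u v (α * β) := by
  rw [sElem, sElem, sElem,
    (completeOrthogonalIdempotents_ι_mul_ι hu hv huv).smul_add_smul_mul_smul_add_smul,
    mul_inv, Units.val_mul, Units.val_mul]

theorem sElem_one (huv : QuadraticMap.polar Q u v = 1) : sElem Q u v 1 = 1 := by
  rw [sElem, inv_one, Units.val_one, one_smul, one_smul, ι_mul_ι_add_swap, huv, map_one]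

theorem reverse_sElem (α : Rˣ) : reverse (Q := Q) (sElem Q u v α) = sElem Q u v α⁻¹ := by
  simp only [sElem, map_add, map_smul, reverse.map_mul, reverse_ι, inv_inv]
  exact add_comm _ _

end HyperbolicPair

/-- `s_α * s_β = s_{αβ}`, `s_α` is invertible with inverse `s_{α⁻¹}`, and
`reverse s_α = s_{α⁻¹}`, so `s_α * reverse s_α = 1`. -/
theorem stmt8 {R M : Type*} [CommRing R] [AddCommGroup M] [Module R M]
    (Q : QuadraticForm R M) (u v : M)
    (hu : Q u = 0) (hv : Q v = 0) (huv : QuadraticMap.polar Q u v = 1) :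
    (∀ α β : Rˣ, sElem Q u v α * sElem Q u v β = sElem Q u v (α * β)) ∧
    (∀ α : Rˣ, sElem Q u v α * sElem Q u v α⁻¹ = 1 ∧ sElem Q u v α⁻¹ * sElem Q u v α = 1) ∧
    (∀ α : Rˣ, CliffordAlgebra.reverse (Q := Q) (sElem Q u v α) = sElem Q u v α⁻¹) ∧
    (∀ α : Rˣ, sElem Q u v α * CliffordAlgebra.reverse (Q := Q) (sElem Q u v α) = 1) := by
  have hinv (α : Rˣ) :
      sElem Q u v α * sElem Q u v α⁻¹ = 1 ∧ sElem Q u v α⁻¹ * sElem Q u v α = 1 := by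
    simp only [sElem_mul hu hv huv, mul_inv_cancel, inv_mul_cancel, sElem_one huv, and_self]
  exact ⟨sElem_mul hu hv huv, hinv, reverse_sElem, fun α => by rw [reverse_sElem, (hinv α).1]⟩
end

section
/- Let R be a commutative ring, M an R-module, Q a quadratic form on M, and u, v ∈ M a hyperbolic pair. Then for every unit α of R: s_α = ι(α•u + α⁻¹•v) * ι(u + v), where both factors are square roots of 1 in CliffordAlgebra Q (since Q(α•u + α⁻¹•v) = 1 and Q(u+v) = 1); and s_α is an element of the spin group of Q (i.e., s_α lies in the Lipschitz group — the subgroup of units generated by the invertible elements ι(m), m ∈ M — is even, and satisfies the unitarity condition star(s_α) * s_α = 1). -/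
/-!
Since `u` and `v` are isotropic, `ι(a•u + b•v) * ι(u + v) = a • ι u ι v + b • ι v ι u`, so
`s_α = ι w * ι (u + v)` with `w = α•u + α⁻¹•v`, and `Q w = Q (u + v) = 1`.
A product `ι a * ι b` is even, lies in the Lipschitz group as soon as `Q a` and `Q b` are units,
and `star (ι a ι b) = ι b ι a`, so it is unitary when `Q a * Q b = 1`.
-/

namespace QuadraticMap

variable {R M N : Type*} [CommRing R] [AddCommGroup M] [Module R M] [AddCommGroup N]
  [Module R N] {Q : QuadraticMap R M N}

theorem map_smul_add_smul_of_isotropic {u v : M} (hu : Q u = 0) (hv : Q v = 0) (a b : R) :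
    Q (a • u + b • v) = (a * b) • polar Q u v := by
  rw [QuadraticMap.map_add (⇑Q), QuadraticMap.map_smul, QuadraticMap.map_smul, hu, hv,
    polar_smul_left, polar_smul_right, smul_smul]
  simp only [smul_zero, zero_add, add_zero]

end QuadraticMap

namespace CliffordAlgebra

variable {R M : Type*} [CommRing R] [AddCommGroup M] [Module R M] {Q : QuadraticForm R M}

theorem ι_smul_add_smul_mul_ι_add_of_isotropic {u v : M} (hu : Q u = 0) (hv : Q v = 0)
    (a b : R) :
    ι Q (a • u + b • v) * ι Q (u + v) = a • (ι Q u * ι Q v) + b • (ι Q v * ι Q u) := by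
  have hιu : ι Q u * ι Q u = 0 := by rw [ι_sq_scalar, hu, map_zero]
  have hιv : ι Q v * ι Q v = 0 := by rw [ι_sq_scalar, hv, map_zero]
  simp only [map_add, map_smul, add_mul, mul_add, smul_mul_assoc, hιu, hιv, smul_zero, zero_add,
    add_zero]
  exact add_comm _ _

theorem ι_mul_self_eq_one {m : M} (hm : Q m = 1) : ι Q m * ι Q m = 1 := by
  rw [ι_sq_scalar, hm, map_one]

theorem ι_mem_map_lipschitzGroup {m : M} (hm : IsUnit (Q m)) :
    ι Q m ∈ (lipschitzGroup Q).toSubmonoid.map (Units.coeHom (CliffordAlgebra Q)) :=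
  ⟨(isUnit_ι_of_isUnit Q hm).unit, Subgroup.subset_closure ⟨m, rfl⟩, rfl⟩

theorem star_ι_mul_ι (a b : M) : star (ι Q a * ι Q b) = ι Q b * ι Q a := by
  rw [star_mul, star_ι, star_ι, neg_mul_neg]

theorem ι_mul_ι_mul_ι_mul_ι_self (a b : M) :
    ι Q a * ι Q b * (ι Q b * ι Q a) = algebraMap R _ (Q a * Q b) := by
  rw [mul_assoc, ← mul_assoc (ι Q b), ι_sq_scalar, Algebra.commutes, ← mul_assoc, ι_sq_scalar,
    ← map_mul]

theorem ι_mul_ι_mem_spinGroup {a b : M} (hab : Q a * Q b = 1) :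
    ι Q a * ι Q b ∈ spinGroup Q := by
  refine ⟨⟨mul_mem (ι_mem_map_lipschitzGroup (IsUnit.of_mul_eq_one _ hab))
    (ι_mem_map_lipschitzGroup (IsUnit.of_mul_eq_one_right _ hab)), ?_⟩,
    ι_mul_ι_mem_evenOdd_zero Q a b⟩
  rw [SetLike.mem_coe, Unitary.mem_iff, star_ι_mul_ι, ι_mul_ι_mul_ι_mul_ι_self,
    ι_mul_ι_mul_ι_mul_ι_self, mul_comm, hab, map_one]
  exact ⟨rfl, rfl⟩

end CliffordAlgebra

section

open CliffordAlgebra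

variable {R M : Type*} [CommRing R] [AddCommGroup M] [Module R M] {Q : QuadraticForm R M}

theorem sElem_eq_ι_mul_ι {u v : M} (hu : Q u = 0) (hv : Q v = 0) (α : Rˣ) :
    sElem Q u v α = ι Q ((α : R) • u + ((α⁻¹ : Rˣ) : R) • v) * ι Q (u + v) :=
  (ι_smul_add_smul_mul_ι_add_of_isotropic hu hv _ _).symm

end

/-- `s_α = ι(α•u + α⁻¹•v) * ι(u + v)`, both factors square to `1`, and `s_α` belongs to the
spin group of `Q`. -/
theorem stmt10 {R M : Type*} [CommRing R] [AddCommGroup M] [Module R M]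
    (Q : QuadraticForm R M) (u v : M)
    (hu : Q u = 0) (hv : Q v = 0) (huv : QuadraticMap.polar Q u v = 1) (α : Rˣ) :
    sElem Q u v α
      = CliffordAlgebra.ι Q ((α : R) • u + ((α⁻¹ : Rˣ) : R) • v)
          * CliffordAlgebra.ι Q (u + v) ∧
    CliffordAlgebra.ι Q ((α : R) • u + ((α⁻¹ : Rˣ) : R) • v)
        * CliffordAlgebra.ι Q ((α : R) • u + ((α⁻¹ : Rˣ) : R) • v) = 1 ∧
    CliffordAlgebra.ι Q (u + v) * CliffordAlgebra.ι Q (u + v) = 1 ∧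
    sElem Q u v α ∈ spinGroup Q := by
  have hQw : Q ((α : R) • u + ((α⁻¹ : Rˣ) : R) • v) = 1 := by
    rw [QuadraticMap.map_smul_add_smul_of_isotropic hu hv, huv, Units.mul_inv, smul_eq_mul,
      mul_one]
  have hQuv : Q (u + v) = 1 := by
    simpa [huv] using QuadraticMap.map_smul_add_smul_of_isotropic hu hv (1 : R) 1
  refine ⟨sElem_eq_ι_mul_ι hu hv α, CliffordAlgebra.ι_mul_self_eq_one hQw,
    CliffordAlgebra.ι_mul_self_eq_one hQuv, ?_⟩
  rw [sElem_eq_ι_mul_ι hu hv α]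
  exact CliffordAlgebra.ι_mul_ι_mem_spinGroup (by rw [hQw, hQuv, one_mul])
end

section
/- Fix m ≥ 1 and integers q, s ≥ 0, and set k := q + 2s and n := k·2^m. Let t, t_1, …, t_q be pairs in {0,1}^m × {0,1}^m with each X_{t_i} a symmetric matrix, and let Φ be the block-diagonal n×n matrix diag(X_{t_1}, …, X_{t_q}, H, …, H) with s blocks H := [[0, I],[I, 0]] (I the 2^m×2^m identity matrix). Let λ_1, …, λ_k ∈ Fˣ and u := diag(λ_1, …, λ_k) ⊗ X_t (Kronecker product, an n×n matrix). If μ ∈ Fˣ satisfies λ_i² · β(t, t_i) = μ for i = 1, …, q and λ_{q+2j−1} · λ_{q+2j} = μ for j = 1, …, s, then transpose(u) · Φ · u = μ · Φ. -/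
open Matrix

/-- The 2×2 matrix `diag(-1, 1)`. -/
def Amat (F : Type*) [Field F] : Matrix (Fin 2) (Fin 2) F := !![-1, 0; 0, 1]

/-- The 2×2 matrix interchanging the basis vectors. -/
def Bmat (F : Type*) [Field F] : Matrix (Fin 2) (Fin 2) F := !![0, 1; 1, 0]

/-- The generator `X_t` of the standard realization of the graded division algebra,
for `t = (x, y)`: the iterated Kronecker product of the matrices `A^{x_j} * B₀^{y_j}`. -/
def Xmat (F : Type*) [Field F] (m : ℕ) (x y : Fin m → ZMod 2) :
    Matrix (Fin m → Fin 2) (Fin m → Fin 2) F :=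
  Matrix.of fun i k => ∏ j, (Amat F ^ (x j).val * Bmat F ^ (y j).val) (i j) (k j)

/-- The bicharacter value `β(t, t') = (-1)^{Σ_j (x_j y'_j + y_j x'_j)}`. -/
def betaSign (F : Type*) [Field F] {m : ℕ}
    (t t' : (Fin m → ZMod 2) × (Fin m → ZMod 2)) : F :=
  (-1 : F) ^ (∑ j, (t.1 j * t'.2 j + t.2 j * t'.1 j) : ZMod 2).val

/-- The block-diagonal matrix `Φ = diag(X_{t_1}, …, X_{t_q}, H, …, H)` with `s` hyperbolic
blocks `H = [[0, I], [I, 0]]`. -/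
def PhiMat (F : Type*) [Field F] (m q s : ℕ)
    (ts : Fin q → (Fin m → ZMod 2) × (Fin m → ZMod 2)) :
    Matrix ((Fin (q + 2 * s)) × (Fin m → Fin 2)) ((Fin (q + 2 * s)) × (Fin m → Fin 2)) F :=
  Matrix.of fun ip i'p' =>
    if h : (ip.1 : ℕ) < q then
      if (i'p'.1 : ℕ) = (ip.1 : ℕ) then
        Xmat F m (ts ⟨ip.1, h⟩).1 (ts ⟨ip.1, h⟩).2 ip.2 i'p'.2
      else 0
    else
      if ((i'p'.1 : ℕ) = if ((ip.1 : ℕ) - q) % 2 = 0 then (ip.1 : ℕ) + 1 else (ip.1 : ℕ) - 1)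
          ∧ i'p'.2 = ip.2 then 1 else 0


/-!
Write `u = diag(λ) ⊗ X_t`; the `(i, i')` block of `uᵀ Φ u` is `λ_i λ_{i'} X_tᵀ Φ_{ii'} X_t`.
The matrices `A^a B₀^b` are orthogonal and commute up to the sign `(-1)^(ad + bc)`, so by
multiplicativity of the Kronecker product `X_tᵀ X_{t'} X_t = β(t, t') X_{t'}` and `X_tᵀ X_t = 1`.
Hence a block `X_{t_i}` of `Φ` is multiplied by `λ_i² β(t, t_i) = μ`, and an identity block of
the `j`-th copy of `H` by `λ_{q+2j-1} λ_{q+2j} = μ`.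
-/

section PiKronecker

variable {ι α β γ R : Type*} [Fintype ι] [CommSemiring R]

def piKronecker (M : ι → Matrix α β R) : Matrix (ι → α) (ι → β) R :=
  Matrix.of fun i k => ∏ j, M j (i j) (k j)

theorem piKronecker_mul [DecidableEq ι] [Fintype β] (M : ι → Matrix α β R)
    (N : ι → Matrix β γ R) :
    piKronecker M * piKronecker N = piKronecker fun j => M j * N j := by
  ext i k
  simp only [piKronecker, mul_apply, of_apply, Finset.prod_univ_sum, Fintype.piFinset_univ,
    Finset.prod_mul_distrib]

theorem piKronecker_transpose (M : ι → Matrix α β R) :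
    (piKronecker M)ᵀ = piKronecker fun j => (M j)ᵀ := rfl

theorem piKronecker_one [DecidableEq α] :
    piKronecker (fun _ : ι => (1 : Matrix α α R)) = 1 := by
  ext i k
  by_cases h : i = k
  · subst h; simp [piKronecker]
  · obtain ⟨j, hj⟩ := Function.ne_iff.mp h
    simpa [piKronecker, one_apply, h] using Finset.prod_eq_zero (Finset.mem_univ j) (by simp [hj])

theorem piKronecker_smul (c : ι → R) (M : ι → Matrix α β R) :
    piKronecker (fun j => c j • M j) = (∏ j, c j) • piKronecker M := by
  ext i k
  simp [piKronecker, Finset.prod_mul_distrib]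

end PiKronecker

section Sign

variable {R : Type*} [CommRing R]

theorem neg_one_pow_val_add (a b : ZMod 2) :
    (-1 : R) ^ (a + b).val = (-1) ^ a.val * (-1) ^ b.val := by
  rw [ZMod.val_add, ← neg_one_pow_eq_pow_mod_two, pow_add]

theorem prod_neg_one_pow_val {ι : Type*} (s : Finset ι) (g : ι → ZMod 2) :
    ∏ j ∈ s, (-1 : R) ^ (g j).val = (-1) ^ (∑ j ∈ s, g j).val := by
  classical
  induction s using Finset.induction_on with
  | empty => simp
  | insert a s ha ih => rw [Finset.prod_insert ha, Finset.sum_insert ha, neg_one_pow_val_add, ih]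

end Sign

section Generators

variable {F : Type*} [Field F]

theorem Amat_transpose : (Amat F)ᵀ = Amat F := by
  ext i j; fin_cases i <;> fin_cases j <;> rfl

theorem Bmat_transpose : (Bmat F)ᵀ = Bmat F := by
  ext i j; fin_cases i <;> fin_cases j <;> rfl

theorem Amat_mul_self : Amat F * Amat F = 1 := by
  ext i j; fin_cases i <;> fin_cases j <;> simp [Amat]

theorem Bmat_mul_self : Bmat F * Bmat F = 1 := by
  ext i j; fin_cases i <;> fin_cases j <;> simp [Bmat]

theorem Bmat_mul_Amat : Bmat F * Amat F = -(Amat F * Bmat F) := by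
  ext i j; fin_cases i <;> fin_cases j <;> simp [Amat, Bmat]

theorem transpose_mul_mul_Amat_pow_mul_Bmat_pow (a b c d : ZMod 2) :
    (Amat F ^ a.val * Bmat F ^ b.val)ᵀ * (Amat F ^ c.val * Bmat F ^ d.val) *
        (Amat F ^ a.val * Bmat F ^ b.val) =
      (-1 : F) ^ (a * d + b * c).val • (Amat F ^ c.val * Bmat F ^ d.val) := by
  have hA (M : Matrix (Fin 2) (Fin 2) F) : Amat F * (Amat F * M) = M := by
    rw [← Matrix.mul_assoc, Amat_mul_self, Matrix.one_mul]
  have hBA (M : Matrix (Fin 2) (Fin 2) F) : Bmat F * (Amat F * M) = -(Amat F * (Bmat F * M)) := by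
    rw [← Matrix.mul_assoc, Bmat_mul_Amat, Matrix.neg_mul, Matrix.mul_assoc]
  have h01 : ∀ x : ZMod 2, x = 0 ∨ x = 1 := by decide
  have h11 : (1 + 1 : ZMod 2) = 0 := by decide
  have hv1 : (1 : ZMod 2).val = 1 := rfl
  rcases h01 a with rfl | rfl <;> rcases h01 b with rfl | rfl <;>
    rcases h01 c with rfl | rfl <;> rcases h01 d with rfl | rfl <;>
    simp [h11, hv1, transpose_mul, Amat_transpose, Bmat_transpose, Matrix.mul_assoc, hA, hBA,
      Amat_mul_self, Bmat_mul_self, Bmat_mul_Amat]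

end Generators

section Xmat

variable {F : Type*} [Field F] {m : ℕ}

theorem Xmat_eq_piKronecker (x y : Fin m → ZMod 2) :
    Xmat F m x y = piKronecker fun j => Amat F ^ (x j).val * Bmat F ^ (y j).val := rfl

theorem transpose_mul_Xmat_mul (x y x' y' : Fin m → ZMod 2) :
    (Xmat F m x y)ᵀ * Xmat F m x' y' * Xmat F m x y =
      betaSign F (x, y) (x', y') • Xmat F m x' y' := by
  simp only [Xmat_eq_piKronecker, piKronecker_transpose, piKronecker_mul,
    transpose_mul_mul_Amat_pow_mul_Bmat_pow, piKronecker_smul, prod_neg_one_pow_val, betaSign]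

theorem Xmat_zero : Xmat F m 0 0 = 1 := by
  simpa [Xmat_eq_piKronecker] using piKronecker_one

theorem Xmat_transpose_mul_self (x y : Fin m → ZMod 2) : (Xmat F m x y)ᵀ * Xmat F m x y = 1 := by
  simpa [Xmat_zero, betaSign] using transpose_mul_Xmat_mul (F := F) x y 0 0

end Xmat

section BlockConjugation

variable {ι α β R : Type*} [Fintype ι] [DecidableEq ι] [Fintype α] [CommSemiring R]

theorem transpose_kronecker_diagonal_mul_mul_apply (d : ι → R) (K : Matrix α β R)
    (Φ : Matrix (ι × α) (ι × α) R) (i i' : ι) (p p' : β) :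
    ((kroneckerMap (· * ·) (diagonal d) K)ᵀ * Φ * kroneckerMap (· * ·) (diagonal d) K)
        (i, p) (i', p') =
      d i * d i' * (Kᵀ * Φ.submatrix (Prod.mk i) (Prod.mk i') * K) p p' := by
  simp only [mul_apply, transpose_apply, kroneckerMap_apply, diagonal_apply, submatrix_apply,
    Fintype.sum_prod_type, ite_mul, zero_mul, mul_ite, mul_zero, Finset.sum_ite_irrel,
    Finset.sum_const_zero, Finset.sum_ite_eq', Finset.mem_univ, if_true, Finset.sum_mul,
    Finset.mul_sum]
  exact Finset.sum_congr rfl fun _ _ => Finset.sum_congr rfl fun _ _ => by ring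

theorem transpose_kronecker_diagonal_mul_mul_eq_smul (d : ι → R) (K : Matrix α α R)
    (Φ : Matrix (ι × α) (ι × α) R) (μ : R)
    (h : ∀ i i', (d i * d i') • (Kᵀ * Φ.submatrix (Prod.mk i) (Prod.mk i') * K) =
      μ • Φ.submatrix (Prod.mk i) (Prod.mk i')) :
    (kroneckerMap (· * ·) (diagonal d) K)ᵀ * Φ * kroneckerMap (· * ·) (diagonal d) K = μ • Φ := by
  ext ⟨i, p⟩ ⟨i', p'⟩
  simpa [transpose_kronecker_diagonal_mul_mul_apply] using congr_fun₂ (h i i') p p'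

end BlockConjugation

-- In row block `i ≥ q` of `PhiMat`, the identity sits in block column `hyperbolicPartner q i`
-- (block indices are 0-based, so the `j`-th copy of `H` occupies blocks `q + 2j, q + 2j + 1`).
def hyperbolicPartner (q i : ℕ) : ℕ := if (i - q) % 2 = 0 then i + 1 else i - 1

theorem mul_eq_of_eq_hyperbolicPartner {M : Type*} [CommMagma M] {q s : ℕ}
    (lam : Fin (q + 2 * s) → M) (μ : M)
    (hμs : ∀ j (hj : j < s), lam ⟨q + 2 * j, by omega⟩ * lam ⟨q + 2 * j + 1, by omega⟩ = μ)
    {i i' : Fin (q + 2 * s)} (hi : q ≤ i) (hi' : (i' : ℕ) = hyperbolicPartner q i) :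
    lam i * lam i' = μ := by
  have hpair : ∀ (j : ℕ) (hj : j < s) (a b : Fin (q + 2 * s)), (a : ℕ) = q + 2 * j →
      (b : ℕ) = q + 2 * j + 1 → lam a * lam b = μ := by
    intro j hj a b ha hb
    rw [(Fin.ext ha : a = ⟨q + 2 * j, by omega⟩), (Fin.ext hb : b = ⟨q + 2 * j + 1, by omega⟩)]
    exact hμs j hj
  have hj : (i - q) / 2 < s := by omega
  unfold hyperbolicPartner at hi'
  split_ifs at hi' with hpar
  · exact hpair _ hj i i' (by omega) (by omega)
  · rw [mul_comm]
    exact hpair _ hj i' i (by omega) (by omega)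

section PhiMat

variable {F : Type*} [Field F] {m q s : ℕ} (ts : Fin q → (Fin m → ZMod 2) × (Fin m → ZMod 2))

theorem PhiMat_submatrix_of_lt {i : Fin (q + 2 * s)} (hi : (i : ℕ) < q) (i' : Fin (q + 2 * s)) :
    (PhiMat F m q s ts).submatrix (Prod.mk i) (Prod.mk i') =
      if i' = i then Xmat F m (ts ⟨i, hi⟩).1 (ts ⟨i, hi⟩).2 else 0 := by
  ext p p'
  rw [apply_ite (fun M : Matrix _ _ F => M p p')]
  simp [PhiMat, hi, Fin.val_eq_val]

theorem PhiMat_submatrix_of_not_lt {i : Fin (q + 2 * s)} (hi : ¬ (i : ℕ) < q)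
    (i' : Fin (q + 2 * s)) :
    (PhiMat F m q s ts).submatrix (Prod.mk i) (Prod.mk i') =
      if (i' : ℕ) = hyperbolicPartner q i then 1 else 0 := by
  ext p p'
  rw [apply_ite (fun M : Matrix _ _ F => M p p')]
  simp [PhiMat, hyperbolicPartner, hi, one_apply, eq_comm (a := p'), ite_and]

end PhiMat

theorem stmt12 {F : Type*} [Field F] (m : ℕ) (q s : ℕ)
    (t : (Fin m → ZMod 2) × (Fin m → ZMod 2))
    (ts : Fin q → (Fin m → ZMod 2) × (Fin m → ZMod 2))
    (lam : Fin (q + 2 * s) → Fˣ) (μ : Fˣ)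
    (hμq : ∀ i : Fin q, ((lam (Fin.castAdd (2 * s) i) : F)) ^ 2 * betaSign F t (ts i) = (μ : F))
    (hμs : ∀ j : Fin s,
      ((lam ⟨q + 2 * (j : ℕ), by have := j.isLt; omega⟩ : F))
        * ((lam ⟨q + 2 * (j : ℕ) + 1, by have := j.isLt; omega⟩ : F)) = (μ : F)) :
    (Matrix.kroneckerMap (· * ·) (Matrix.diagonal fun i => ((lam i : F))) (Xmat F m t.1 t.2))ᵀ
        * PhiMat F m q s ts
        * Matrix.kroneckerMap (· * ·) (Matrix.diagonal fun i => ((lam i : F))) (Xmat F m t.1 t.2)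
      = (μ : F) • PhiMat F m q s ts := by
  refine transpose_kronecker_diagonal_mul_mul_eq_smul _ _ _ _ fun i i' => ?_
  by_cases hi : (i : ℕ) < q
  · rw [PhiMat_submatrix_of_lt ts hi]
    split_ifs with hii
    · rw [hii, transpose_mul_Xmat_mul, smul_smul, ← sq, ← hμq ⟨i, hi⟩]
      rfl
    · simp
  · rw [PhiMat_submatrix_of_not_lt ts hi]
    split_ifs with hii
    · rw [Matrix.mul_one, Xmat_transpose_mul_self,
        mul_eq_of_eq_hyperbolicPartner (fun i => (lam i : F)) μ (fun j hj => hμs ⟨j, hj⟩)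
          (not_lt.mp hi) hii]
    · simp
end

section
/- Fix m ≥ 2 and integers q, s ≥ 0, and set k := q + 2s and n := k·2^m. Let t, t_1, …, t_q be pairs in {0,1}^m × {0,1}^m, let λ_1, …, λ_k ∈ Fˣ, and let u := diag(λ_1, …, λ_k) ⊗ X_t (Kronecker product, an n×n matrix). If μ ∈ Fˣ satisfies λ_i² · β(t, t_i) = μ for i = 1, …, q and λ_{q+2j−1} · λ_{q+2j} = μ for j = 1, …, s, then det(u) = μ^{n/2}. -/
/-!
`det (D ⊗ X_t) = (det D)^(2^m) * (det X_t)^k`. Peeling off one tensor factor at a time shows that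
`det X_t` is a product of `2^(m-1)`-th powers of determinants `±1`, hence equals `1` once `m ≥ 2`.
Since `β² = 1`, each `λ_i⁴` with `i ≤ q` equals `μ²`, and each paired product satisfies
`(λ_{q+2j-1} λ_{q+2j})⁴ = μ⁴`; so `(det D)⁴ = μ^(2k)`, and raising to the power `2^(m-2)`
gives the claim.
-/

open Matrix

theorem Fin.prod_univ_two_mul {M : Type*} [CommMonoid M] (s : ℕ) (f : Fin (2 * s) → M) :
    ∏ i, f i = ∏ j : Fin s, f ⟨2 * j, by omega⟩ * f ⟨2 * j + 1, by omega⟩ := by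
  rw [← Fintype.prod_equiv (finProdFinEquiv.trans (finCongr (Nat.mul_comm s 2))) _ f
    (fun _ => rfl), Fintype.prod_prod_type]
  refine Finset.prod_congr rfl fun j _ => ?_
  rw [Fin.prod_univ_two]
  congr 2 <;> ext <;> simp [mul_comm, add_comm]

theorem pow_four_eq_sq_of_sq_mul_eq {M : Type*} [CommMonoid M] {a b c : M}
    (hb : b ^ 2 = 1) (h : a ^ 2 * b = c) : a ^ 4 = c ^ 2 := by
  rw [← h, mul_pow, hb, mul_one, ← pow_mul]

theorem prod_pow_four_eq_of_sq_mul_eq_of_mul_eq {M : Type*} [CommMonoid M] {q s : ℕ}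
    (lam : Fin (q + 2 * s) → M) (b : Fin q → M) (c : M) (hb : ∀ i, b i ^ 2 = 1)
    (hq : ∀ i, lam (Fin.castAdd (2 * s) i) ^ 2 * b i = c)
    (hs : ∀ j : Fin s, lam ⟨q + 2 * j, by omega⟩ * lam ⟨q + 2 * j + 1, by omega⟩ = c) :
    (∏ i, lam i) ^ 4 = c ^ (2 * (q + 2 * s)) := by
  rw [Fin.prod_univ_add, Fin.prod_univ_two_mul, mul_pow, ← Finset.prod_pow, ← Finset.prod_pow]
  have hsingle : ∀ i : Fin q, lam (Fin.castAdd (2 * s) i) ^ 4 = c ^ 2 := fun i =>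
    pow_four_eq_sq_of_sq_mul_eq (hb i) (hq i)
  have hpair : ∀ j : Fin s, (lam (Fin.natAdd q ⟨2 * j, by omega⟩)
      * lam (Fin.natAdd q ⟨2 * j + 1, by omega⟩)) ^ 4 = c ^ 4 := fun j => by
    rw [← hs j]; rfl
  simp only [hsingle, hpair, Finset.prod_const, Finset.card_univ, Fintype.card_fin, ← pow_mul,
    ← pow_add]
  ring_nf

theorem Amat_det {F : Type*} [Field F] : (Amat F).det = -1 := by
  simp [Amat]

theorem Bmat_det {F : Type*} [Field F] : (Bmat F).det = -1 := by
  simp [Bmat]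

theorem det_Amat_pow_mul_Bmat_pow_sq {F : Type*} [Field F] (a b : ℕ) :
    (Amat F ^ a * Bmat F ^ b).det ^ 2 = 1 := by
  rw [det_mul, det_pow, det_pow, Amat_det, Bmat_det, mul_pow, ← pow_mul, ← pow_mul,
    pow_mul', pow_mul' _ b, neg_one_sq, one_pow, one_pow, one_mul]

theorem betaSign_sq {F : Type*} [Field F] {m : ℕ}
    (t t' : (Fin m → ZMod 2) × (Fin m → ZMod 2)) : betaSign F t t' ^ 2 = 1 := by
  rw [betaSign, ← pow_mul, pow_mul', neg_one_sq, one_pow]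

theorem Xmat_succ {F : Type*} [Field F] (m : ℕ) (x y : Fin (m + 1) → ZMod 2) :
    Xmat F (m + 1) x y =
      (kroneckerMap (· * ·) (Amat F ^ (x 0).val * Bmat F ^ (y 0).val)
          (Xmat F m (Fin.tail x) (Fin.tail y))).submatrix
        (Fin.consEquiv fun _ => Fin 2).symm (Fin.consEquiv fun _ => Fin 2).symm := by
  ext i k
  simp only [Xmat, submatrix_apply, kroneckerMap_apply, of_apply, Fin.consEquiv_symm_apply,
    Fin.prod_univ_succ]
  rfl

theorem det_Xmat_succ {F : Type*} [Field F] (m : ℕ) (x y : Fin (m + 1) → ZMod 2) :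
    (Xmat F (m + 1) x y).det =
      (Amat F ^ (x 0).val * Bmat F ^ (y 0).val).det ^ 2 ^ m *
        (Xmat F m (Fin.tail x) (Fin.tail y)).det ^ 2 := by
  rw [Xmat_succ, det_submatrix_equiv_self, det_kronecker]
  simp

theorem det_Xmat_sq {F : Type*} [Field F] :
    ∀ (m : ℕ) (x y : Fin m → ZMod 2), (Xmat F m x y).det ^ 2 = 1
  | 0, x, y => by
    rw [det_unique]
    simp [Xmat]
  | m + 1, x, y => by
    rw [det_Xmat_succ, mul_pow, ← pow_mul, ← pow_mul, pow_mul', pow_mul',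
      det_Amat_pow_mul_Bmat_pow_sq, det_Xmat_sq m, one_pow, one_pow, one_mul]

theorem det_Xmat {F : Type*} [Field F] {m : ℕ} (hm : 2 ≤ m) (x y : Fin m → ZMod 2) :
    (Xmat F m x y).det = 1 := by
  obtain ⟨p, rfl⟩ : ∃ p, m = p + 1 + 1 := ⟨m - 2, by omega⟩
  rw [det_Xmat_succ, det_Xmat_sq, pow_succ, pow_mul', det_Amat_pow_mul_Bmat_pow_sq, one_pow,
    one_mul]

/-- For `m ≥ 2`, the determinant of `u = diag(λ_1, …, λ_k) ⊗ X_t` equals `μ^{n/2}`. -/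
theorem stmt13 {F : Type*} [Field F] (m : ℕ) (hm : 2 ≤ m) (q s : ℕ)
    (t : (Fin m → ZMod 2) × (Fin m → ZMod 2))
    (ts : Fin q → (Fin m → ZMod 2) × (Fin m → ZMod 2))
    (lam : Fin (q + 2 * s) → Fˣ) (μ : Fˣ)
    (hμq : ∀ i : Fin q, ((lam (Fin.castAdd (2 * s) i) : F)) ^ 2 * betaSign F t (ts i) = (μ : F))
    (hμs : ∀ j : Fin s,
      ((lam ⟨q + 2 * (j : ℕ), by have := j.isLt; omega⟩ : F))
        * ((lam ⟨q + 2 * (j : ℕ) + 1, by have := j.isLt; omega⟩ : F)) = (μ : F)) :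
    (Matrix.kroneckerMap (· * ·) (Matrix.diagonal fun i => ((lam i : F)))
        (Xmat F m t.1 t.2)).det
      = (μ : F) ^ ((q + 2 * s) * 2 ^ m / 2) := by
  obtain ⟨N, hN⟩ : ∃ N, 2 ^ m = 4 * N := ⟨2 ^ (m - 2), by rw [← pow_sub_mul_pow 2 hm]; ring⟩
  have hprod := prod_pow_four_eq_of_sq_mul_eq_of_mul_eq (fun i => (lam i : F))
    (fun i => betaSign F t (ts i)) μ (fun i => betaSign_sq _ _) hμq hμs
  rw [det_kronecker, det_diagonal, det_Xmat hm, one_pow, mul_one, Fintype.card_fun,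
    Fintype.card_fin, Fintype.card_fin, hN, pow_mul, hprod, ← pow_mul]
  rw [show (q + 2 * s) * (4 * N) = 2 * (2 * (q + 2 * s) * N) by ring,
    Nat.mul_div_cancel_left _ two_pos]
end
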